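/- arXiv:1108.1429 — 9 statements merged into one kernel-verified Lean document; each statement's English description precedes it below -/
import Mathlib

section
/- For every g ∈ W one has Σ_{T ⊆ R} Σ_{J ⊆ T} (−1)^{|T∖J|} · Fix(g, W/W_{R∖J}) = |W| if g is the identity and = 0 otherwise. Equivalently, the virtual characters χ^T := Σ_{J ⊆ T} (−1)^{|T∖J|} Ind_{W_{R∖J}}^W 1, for T ⊆ R, sum to the character of the regular representation of W, so that ℂW decomposes as the direct sum of the ribbon representations χ^T over all T ⊆ R. -/
/-- Alternating double sum over subsets collapses to the value at `univ`. -/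
lemma alt_double_sum_collapse {ι : Type*} [Fintype ι] [DecidableEq ι]
    (F : Finset ι → ℤ) :
    ∑ T : Finset ι, ∑ J ∈ T.powerset, (-1 : ℤ) ^ (T.card - J.card) * F J
      = F Finset.univ := by
  classical
  have h1 : ∀ T : Finset ι,
      (∑ J ∈ T.powerset, (-1 : ℤ) ^ (T.card - J.card) * F J)
        = ∑ J : Finset ι, if J ⊆ T then (-1 : ℤ) ^ (T.card - J.card) * F J else 0 := by
    intro T
    symm
    rw [← Finset.sum_filter]
    congr 1
    ext J
    simp [Finset.mem_powerset]
  calc ∑ T : Finset ι, ∑ J ∈ T.powerset, (-1 : ℤ) ^ (T.card - J.card) * F J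
      = ∑ T : Finset ι, ∑ J : Finset ι,
          if J ⊆ T then (-1 : ℤ) ^ (T.card - J.card) * F J else 0 := by
        exact Finset.sum_congr rfl fun T _ => h1 T
    _ = ∑ J : Finset ι, ∑ T : Finset ι,
          if J ⊆ T then (-1 : ℤ) ^ (T.card - J.card) * F J else 0 :=
        Finset.sum_comm
    _ = ∑ J : Finset ι,
          (∑ T ∈ Finset.univ.filter (fun T => J ⊆ T),
            (-1 : ℤ) ^ (T.card - J.card)) * F J := by
        refine Finset.sum_congr rfl fun J _ => ?_
        rw [Finset.sum_filter, Finset.sum_mul]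
        refine Finset.sum_congr rfl fun T _ => ?_
        split <;> simp
    _ = ∑ J : Finset ι,
          (∑ S ∈ Jᶜ.powerset, (-1 : ℤ) ^ S.card) * F J := by
        refine Finset.sum_congr rfl fun J _ => ?_
        congr 1
        refine Finset.sum_bij' (fun T _ => T \ J) (fun S _ => S ∪ J) ?_ ?_ ?_ ?_ ?_
        · intro T hT
          exact Finset.mem_powerset.mpr fun x hx =>
            Finset.mem_compl.mpr (Finset.mem_sdiff.mp hx).2
        · intro S hS; simp
        · intro T hT
          simp only [Finset.mem_filter, Finset.mem_univ, true_and] at hT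
          exact Finset.sdiff_union_of_subset hT
        · intro S hS
          simp only [Finset.mem_powerset] at hS
          show (S ∪ J) \ J = S
          rw [Finset.union_sdiff_right]
          exact Finset.sdiff_eq_self_of_disjoint (Finset.disjoint_left.mpr
            fun x hx hxJ => Finset.mem_compl.mp (hS hx) hxJ)
        · intro T hT
          simp only [Finset.mem_filter, Finset.mem_univ, true_and] at hT
          rw [Finset.card_sdiff_of_subset hT]
    _ = ∑ J : Finset ι, (if Jᶜ = ∅ then (1 : ℤ) else 0) * F J := by
        refine Finset.sum_congr rfl fun J _ => ?_
        rw [Finset.sum_powerset_neg_one_pow_card]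
    _ = ∑ J : Finset ι, (if J = Finset.univ then F J else 0) := by
        refine Finset.sum_congr rfl fun J _ => ?_
        by_cases h : J = Finset.univ
        · simp [h]
        · rw [if_neg h, if_neg (by simpa [Finset.compl_eq_empty_iff] using h), zero_mul]
    _ = F Finset.univ := by simp

/-- For a finite group `W`, a finite index set `ι` (playing the
role of `R`), and subgroups `W_K ≤ W` for `K ⊆ R` with `W_∅` trivial, the
alternating sums of permutation characters of the coset actions satisfy
`Σ_{T ⊆ R} Σ_{J ⊆ T} (−1)^{|T∖J|} · Fix(g, W/W_{R∖J}) = |W|` if `g = 1` and `0`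
otherwise; i.e. the ribbon representations `χ^T` sum to the regular
representation of `W`. -/
theorem ribbon_sum_is_regular_representation
    {W : Type*} [Group W] [Finite W] [DecidableEq W]
    {ι : Type*} [Fintype ι] [DecidableEq ι]
    (Wsub : Finset ι → Subgroup W) (h0 : Wsub ∅ = ⊥) (g : W) :
    ∑ T : Finset ι, ∑ J ∈ T.powerset,
        ((-1 : ℤ)) ^ (T.card - J.card) *
          (Nat.card (MulAction.fixedBy (W ⧸ Wsub Jᶜ) g) : ℤ)
      = if g = 1 then (Nat.card W : ℤ) else 0 := by
  classical
  rw [alt_double_sum_collapse (fun J => (Nat.card (MulAction.fixedBy (W ⧸ Wsub Jᶜ) g) : ℤ))]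
  rw [Finset.compl_univ, h0]
  by_cases hg : g = 1
  · subst hg
    simp only [if_pos rfl]
    have : MulAction.fixedBy (W ⧸ (⊥ : Subgroup W)) (1 : W) = Set.univ := by
      ext x; simp [MulAction.mem_fixedBy]
    rw [this]
    simp [Nat.card_congr (QuotientGroup.quotientBot (G := W)).toEquiv]
  · rw [if_neg hg]
    have : MulAction.fixedBy (W ⧸ (⊥ : Subgroup W)) g = ∅ := by
      ext x
      induction x using QuotientGroup.induction_on with
      | H x =>
        simp only [MulAction.mem_fixedBy, Set.mem_empty_iff_false, iff_false]
        intro h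
        apply hg
        have : ((g * x : W) : W ⧸ (⊥ : Subgroup W)) = (x : W ⧸ (⊥ : Subgroup W)) := h
        rw [QuotientGroup.eq] at this
        rw [Subgroup.mem_bot, mul_eq_one_iff_eq_inv] at this
        have h2 : g * x = x := inv_injective this
        exact mul_eq_right.mp h2
    rw [this]
    simp
end

section
/- Let n ≥ 0 and let M be an (n+1)×(n+1) matrix over a commutative ring, with rows indexed by {0, 1, …, n} and columns indexed by {1, 2, …, n+1}, whose entries satisfy M(i, k) = 0 whenever k < i. Then det M = Σ_{j=0}^{n} Σ_{1 ≤ i₁ < i₂ < ⋯ < i_j ≤ n} (−1)^{n−j} · M(0, i₁) · M(i₁, i₂) ⋯ M(i_{j−1}, i_j) · M(i_j, n+1) · Π_{i ∈ {1,…,n}∖{i₁,…,i_j}} M(i, i), where for j = 0 the chain product M(0,i₁)⋯M(i_j, n+1) is interpreted as the single factor M(0, n+1). -/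
section HessenbergAux

variable {R : Type*} [CommRing R]

/-- Product of `E` along consecutive pairs of `a :: l`. -/
private def chainP (E : ℕ → ℕ → R) : ℕ → List ℕ → R
  | _, [] => 1
  | a, b :: l => E a b * chainP E b l

private lemma zipWith_eq_chainP (E : ℕ → ℕ → R) (a : ℕ) (l : List ℕ) :
    (List.zipWith E (a :: l) l).prod = chainP E a l := by
  induction l generalizing a with
  | nil => simp [chainP]
  | cons b l ih => simp [chainP, ih]

private lemma chainP_shift (E : ℕ → ℕ → R) (g : ℕ → ℕ)
    (hg : ∀ b, b ≠ 0 → g b = b + 1) (a : ℕ) (l : List ℕ)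
    (hl : ∀ b ∈ l, b ≠ 0) :
    chainP (fun x y => E (g x) (y + 1)) a l = chainP E (g a) (l.map (· + 1)) := by
  induction l generalizing a with
  | nil => simp [chainP]
  | cons b l ih =>
    simp only [chainP, List.map_cons]
    rw [ih b fun c hc => hl c (List.mem_cons_of_mem _ hc),
      hg b (hl b List.mem_cons_self)]

private lemma succ_inj' : Function.Injective (· + 1 : ℕ → ℕ) := fun a b h => by
  simpa using h

private lemma sort_image_succ (T : Finset ℕ) :
    (T.image (· + 1)).sort (· ≤ ·) = (T.sort (· ≤ ·)).map (· + 1) := by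
  have h1 : (T.image (· + 1)).1 = T.1.map (· + 1) := by
    rw [Finset.image_val, Multiset.dedup_eq_self.mpr (T.nodup.map succ_inj')]
  rw [Finset.sort, h1,
    ← Multiset.map_sort (r := (· ≤ ·)) (r' := (· ≤ ·)) (f := (· + 1)) (s := T.1) (by intro a _ b _; simp)]
  rfl

private lemma sum_powerset_image {g : ℕ → ℕ} (hg : Function.Injective g)
    (s : Finset ℕ) (f : Finset ℕ → R) :
    ∑ S ∈ (s.image g).powerset, f S = ∑ T ∈ s.powerset, f (T.image g) := by
  refine (Finset.sum_bij (fun T _ => T.image g) ?_ ?_ ?_ ?_).symm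
  · intro T hT
    exact Finset.mem_powerset.mpr (Finset.image_subset_image (Finset.mem_powerset.mp hT))
  · intro T₁ _ T₂ _ h
    exact Finset.image_injective hg h
  · intro S hS
    refine ⟨s.filter (fun x => g x ∈ S), Finset.mem_powerset.mpr (Finset.filter_subset _ _), ?_⟩
    ext y
    simp only [Finset.mem_image, Finset.mem_filter]
    constructor
    · rintro ⟨x, ⟨-, hx⟩, rfl⟩; exact hx
    · intro hy
      obtain ⟨x, hx, rfl⟩ := Finset.mem_image.mp (Finset.mem_powerset.mp hS hy)
      exact ⟨x, ⟨hx, hy⟩, rfl⟩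
  · intros; rfl

private def RHSh (n : ℕ) (E : ℕ → ℕ → R) : R :=
  ∑ S ∈ (Finset.Icc 1 n).powerset,
    (-1 : R) ^ (n - S.card) * chainP E 0 (S.sort (· ≤ ·) ++ [n + 1]) *
      ∏ i ∈ Finset.Icc 1 n \ S, E i i

private lemma RHSh_succ (n : ℕ) (E : ℕ → ℕ → R) :
    RHSh (n + 1) E = E 0 1 * RHSh n (fun a b => E (a + 1) (b + 1))
      - E 1 1 * RHSh n (fun a b => E (if a = 0 then 0 else a + 1) (b + 1)) := by
  have hIcc : Finset.Icc 1 (n + 1) = insert 1 ((Finset.Icc 1 n).image (· + 1)) := by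
    ext x
    simp only [Finset.mem_Icc, Finset.mem_insert, Finset.mem_image]
    constructor
    · rintro ⟨h1, h2⟩
      rcases Nat.eq_or_lt_of_le h1 with h | h
      · exact Or.inl h.symm
      · exact Or.inr ⟨x - 1, ⟨by omega, by omega⟩, by omega⟩
    · rintro (rfl | ⟨y, ⟨hy1, hy2⟩, rfl⟩) <;> omega
  have h1img : (1 : ℕ) ∉ (Finset.Icc 1 n).image (· + 1) := by
    simp only [Finset.mem_image, Finset.mem_Icc]
    rintro ⟨y, ⟨hy, -⟩, h⟩; omega
  rw [RHSh, hIcc, Finset.sum_powerset_insert h1img,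
    sum_powerset_image succ_inj', sum_powerset_image succ_inj']
  have key : ∀ T ∈ (Finset.Icc 1 n).powerset,
      ((-1 : R) ^ (n + 1 - (T.image (· + 1)).card) *
          chainP E 0 ((T.image (· + 1)).sort (· ≤ ·) ++ [n + 1 + 1]) *
          ∏ i ∈ insert 1 ((Finset.Icc 1 n).image (· + 1)) \ T.image (· + 1), E i i)
        = -(E 1 1 * ((-1 : R) ^ (n - T.card) *
            chainP (fun a b => E (if a = 0 then 0 else a + 1) (b + 1)) 0
              (T.sort (· ≤ ·) ++ [n + 1]) *
            ∏ i ∈ Finset.Icc 1 n \ T, E (if i = 0 then 0 else i + 1) (i + 1))) := by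
    intro T hT
    have hTsub := Finset.mem_powerset.mp hT
    have hcard : T.card ≤ n := le_trans (Finset.card_le_card hTsub) (by simp)
    have hne : ∀ b ∈ T.sort (· ≤ ·) ++ [n + 1], b ≠ 0 := by
      intro b hb
      rcases List.mem_append.mp hb with hb | hb
      · have := hTsub (Finset.mem_sort (α := ℕ) (· ≤ ·) |>.mp hb)
        simp only [Finset.mem_Icc] at this; omega
      · simp only [List.mem_singleton] at hb; omega
    have hchain : chainP E 0 ((T.image (· + 1)).sort (· ≤ ·) ++ [n + 1 + 1])
        = chainP (fun a b => E (if a = 0 then 0 else a + 1) (b + 1)) 0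
            (T.sort (· ≤ ·) ++ [n + 1]) := by
      rw [chainP_shift E (fun x => if x = 0 then 0 else x + 1)
        (fun b hb => by simp [hb]) 0 _ hne]
      simp [sort_image_succ]
    have hdiff : insert 1 ((Finset.Icc 1 n).image (· + 1)) \ T.image (· + 1)
        = insert 1 (((Finset.Icc 1 n) \ T).image (· + 1)) := by
      rw [Finset.image_sdiff _ _ succ_inj']
      exact Finset.insert_sdiff_of_notMem _ (fun h => h1img (Finset.image_subset_image hTsub h))
    have h1notin : (1 : ℕ) ∉ ((Finset.Icc 1 n) \ T).image (· + 1) :=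
      fun h => h1img (Finset.image_subset_image (Finset.sdiff_subset) h)
    have hcardim : (T.image (· + 1)).card = T.card := Finset.card_image_of_injective _ succ_inj'
    have hsign : (-1 : R) ^ (n + 1 - T.card) = -(-1 : R) ^ (n - T.card) := by
      have h : n + 1 - T.card = (n - T.card) + 1 := by omega
      rw [h, pow_succ]; ring
    have hprod : (∏ i ∈ Finset.Icc 1 n \ T, E (i + 1) (i + 1))
        = ∏ i ∈ Finset.Icc 1 n \ T, E (if i = 0 then 0 else i + 1) (i + 1) := by
      refine Finset.prod_congr rfl fun i hi => ?_
      have hi0 : i ≠ 0 := by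
        have := (Finset.mem_sdiff.mp hi).1
        simp only [Finset.mem_Icc] at this; omega
      rw [if_neg hi0]
    rw [hchain, hdiff, Finset.prod_insert h1notin,
      Finset.prod_image (fun a _ b _ h => succ_inj' h), hcardim, hsign, hprod]
    ring
  have key2 : ∀ T ∈ (Finset.Icc 1 n).powerset,
      ((-1 : R) ^ (n + 1 - (insert 1 (T.image (· + 1))).card) *
          chainP E 0 ((insert 1 (T.image (· + 1))).sort (· ≤ ·) ++ [n + 1 + 1]) *
          ∏ i ∈ insert 1 ((Finset.Icc 1 n).image (· + 1)) \ insert 1 (T.image (· + 1)), E i i)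
        = E 0 1 * ((-1 : R) ^ (n - T.card) *
            chainP (fun a b => E (a + 1) (b + 1)) 0 (T.sort (· ≤ ·) ++ [n + 1]) *
            ∏ i ∈ Finset.Icc 1 n \ T, E (i + 1) (i + 1)) := by
    intro T hT
    have hTsub := Finset.mem_powerset.mp hT
    have hne : ∀ b ∈ T.sort (· ≤ ·) ++ [n + 1], b ≠ 0 := by
      intro b hb
      rcases List.mem_append.mp hb with hb | hb
      · have := hTsub (Finset.mem_sort (α := ℕ) (· ≤ ·) |>.mp hb)
        simp only [Finset.mem_Icc] at this; omega
      · simp only [List.mem_singleton] at hb; omega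
    have h1T : (1 : ℕ) ∉ T.image (· + 1) :=
      fun h => h1img (Finset.image_subset_image hTsub h)
    have hsort : (insert 1 (T.image (· + 1))).sort (· ≤ ·)
        = 1 :: (T.image (· + 1)).sort (· ≤ ·) := by
      refine Finset.sort_insert _ ?_ h1T
      intro b hb
      obtain ⟨y, -, rfl⟩ := Finset.mem_image.mp hb; omega
    have hchain : chainP E 0 ((insert 1 (T.image (· + 1))).sort (· ≤ ·) ++ [n + 1 + 1])
        = E 0 1 * chainP (fun a b => E (a + 1) (b + 1)) 0 (T.sort (· ≤ ·) ++ [n + 1]) := by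
      rw [hsort, List.cons_append]
      show E 0 1 * chainP E 1 _ = _
      congr 1
      rw [chainP_shift E (· + 1) (fun b _ => rfl) 0 _ hne]
      simp [sort_image_succ]
    have hcard : (insert 1 (T.image (· + 1))).card = T.card + 1 := by
      rw [Finset.card_insert_of_notMem h1T, Finset.card_image_of_injective _ succ_inj']
    have hdiff : insert 1 ((Finset.Icc 1 n).image (· + 1)) \ insert 1 (T.image (· + 1))
        = ((Finset.Icc 1 n) \ T).image (· + 1) := by
      ext x
      simp only [Finset.mem_sdiff, Finset.mem_insert, Finset.mem_image, Finset.mem_Icc]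
      constructor
      · rintro ⟨rfl | ⟨y, ⟨hy1, hy2⟩, rfl⟩, hx⟩
        · exact absurd (Or.inl rfl) hx
        · exact ⟨y, ⟨⟨hy1, hy2⟩, fun hyT => hx (Or.inr ⟨y, hyT, rfl⟩)⟩, rfl⟩
      · rintro ⟨y, ⟨⟨hy1, hy2⟩, hyT⟩, rfl⟩
        refine ⟨Or.inr ⟨y, ⟨hy1, hy2⟩, rfl⟩, ?_⟩
        rintro (h | ⟨z, hz, hzy⟩)
        · omega
        · cases succ_inj' hzy; exact hyT hz
    have hpow : n + 1 - (T.card + 1) = n - T.card := by omega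
    rw [hchain, hcard, hdiff, Finset.prod_image (fun a _ b _ h => succ_inj' h), hpow]
    ring
  rw [Finset.sum_congr rfl key, Finset.sum_congr rfl key2, RHSh, RHSh,
    Finset.sum_neg_distrib, ← Finset.mul_sum, ← Finset.mul_sum]
  ring

private lemma det_eq_RHSh (n : ℕ) : ∀ (E : ℕ → ℕ → R),
    (∀ i k : Fin (n + 1), (k : ℕ) + 1 < (i : ℕ) → E (i : ℕ) ((k : ℕ) + 1) = 0) →
    (Matrix.of fun i k : Fin (n + 1) => E (i : ℕ) ((k : ℕ) + 1)).det = RHSh n E := by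
  induction n with
  | zero =>
    intro E _
    rw [Matrix.det_fin_one]
    simp [RHSh, chainP, Finset.Icc_eq_empty_of_lt (by norm_num : (0:ℕ) < 1)]
  | succ n ih =>
    intro E hE
    rw [Matrix.det_succ_column_zero, Fin.sum_univ_succ, Fin.sum_univ_succ, Fin.succ_zero_eq_one]
    have hsub0 : (Matrix.of fun i k : Fin (n + 2) => E (i : ℕ) ((k : ℕ) + 1)).submatrix
          (Fin.succAbove 0) Fin.succ
        = Matrix.of (fun j k : Fin (n + 1) =>
            (fun a b => E (a + 1) (b + 1)) (j : ℕ) ((k : ℕ) + 1)) := by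
      ext j k
      simp [Fin.succAbove_zero, Fin.val_succ]
    have hsub1 : (Matrix.of fun i k : Fin (n + 2) => E (i : ℕ) ((k : ℕ) + 1)).submatrix
          (Fin.succAbove 1) Fin.succ
        = Matrix.of (fun j k : Fin (n + 1) =>
            (fun a b => E (if a = 0 then 0 else a + 1) (b + 1)) (j : ℕ) ((k : ℕ) + 1)) := by
      ext j k
      have hval : (((1 : Fin (n + 2)).succAbove j : Fin (n + 2)) : ℕ)
          = if (j : ℕ) = 0 then 0 else (j : ℕ) + 1 := by
        rcases Nat.eq_zero_or_pos (j : ℕ) with h | h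
        · rw [if_pos h, Fin.succAbove_of_castSucc_lt]
          · simpa using h
          · rw [Fin.lt_def]; simp only [Fin.coe_castSucc, Fin.val_one]; omega
        · rw [if_neg (by omega), Fin.succAbove_of_le_castSucc]
          · simp
          · rw [Fin.le_def]; simp only [Fin.coe_castSucc, Fin.val_one]; omega
      simp only [Matrix.submatrix_apply, Matrix.of_apply, hval, Fin.val_succ]
    have h1 : ∀ i k : Fin (n + 1), (k : ℕ) + 1 < (i : ℕ) →
        (fun a b => E (a + 1) (b + 1)) (i : ℕ) ((k : ℕ) + 1) = 0 := by
      intro i k h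
      show E ((i : ℕ) + 1) (((k : ℕ) + 1) + 1) = 0
      have := hE i.succ k.succ (by simp only [Fin.val_succ]; omega)
      simpa using this
    have h2 : ∀ i k : Fin (n + 1), (k : ℕ) + 1 < (i : ℕ) →
        (fun a b => E (if a = 0 then 0 else a + 1) (b + 1)) (i : ℕ) ((k : ℕ) + 1) = 0 := by
      intro i k h
      show E (if (i : ℕ) = 0 then 0 else (i : ℕ) + 1) (((k : ℕ) + 1) + 1) = 0
      rw [if_neg (by omega)]
      have := hE i.succ k.succ (by simp only [Fin.val_succ]; omega)
      simpa using this
    have ih1 : (Matrix.of fun j k : Fin (n + 1) =>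
        (fun a b => E (a + 1) (b + 1)) (j : ℕ) ((k : ℕ) + 1)).det
        = RHSh n (fun a b => E (a + 1) (b + 1)) := ih (fun a b => E (a + 1) (b + 1)) h1
    have ih2 : (Matrix.of fun j k : Fin (n + 1) =>
        (fun a b => E (if a = 0 then 0 else a + 1) (b + 1)) (j : ℕ) ((k : ℕ) + 1)).det
        = RHSh n (fun a b => E (if a = 0 then 0 else a + 1) (b + 1)) :=
      ih (fun a b => E (if a = 0 then 0 else a + 1) (b + 1)) h2
    rw [hsub0, hsub1, ih1, ih2]
    have hrest : ∑ i : Fin n,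
        (-1 : R) ^ ((i.succ.succ : Fin (n + 2)) : ℕ) *
          (Matrix.of fun i k : Fin (n + 2) => E (i : ℕ) ((k : ℕ) + 1)) i.succ.succ 0 *
          ((Matrix.of fun i k : Fin (n + 2) => E (i : ℕ) ((k : ℕ) + 1)).submatrix
            (Fin.succAbove i.succ.succ) Fin.succ).det = 0 := by
      refine Finset.sum_eq_zero fun i _ => ?_
      have h0 : (Matrix.of fun i k : Fin (n + 2) => E (i : ℕ) ((k : ℕ) + 1)) i.succ.succ 0 = 0 :=
        hE i.succ.succ 0 (by simp only [Fin.val_succ, Fin.val_zero]; omega)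
      rw [h0, mul_zero, zero_mul]
    rw [hrest, RHSh_succ]
    simp only [Matrix.of_apply, Fin.val_zero, Fin.val_one, Fin.isValue]
    norm_num
    ring

end HessenbergAux

/-- Determinant expansion of an upper-Hessenberg matrix.  With
rows labelled `0, …, n` and columns labelled `1, …, n+1` (the entry in row `a`
and column `b` being `E a b`), suppose `E a b = 0` whenever `b < a`.  Then the
determinant equals the sum, over all subsets `S = {i₁ < ⋯ < i_j} ⊆ {1, …, n}`,
of `(−1)^{n−j} · E(0,i₁)E(i₁,i₂)⋯E(i_j,n+1) · Π_{i ∈ {1,…,n}∖S} E(i,i)`. -/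
theorem det_hessenberg_chain_expansion
    {R : Type*} [CommRing R] (n : ℕ) (E : ℕ → ℕ → R)
    (hE : ∀ i k : Fin (n + 1), (k : ℕ) + 1 < (i : ℕ) → E (i : ℕ) ((k : ℕ) + 1) = 0) :
    (Matrix.of fun i k : Fin (n + 1) => E (i : ℕ) ((k : ℕ) + 1)).det =
      ∑ S ∈ (Finset.Icc 1 n).powerset,
        (-1 : R) ^ (n - S.card) *
          (let L := 0 :: (Finset.sort S (· ≤ ·) ++ [n + 1]);
            (List.zipWith E L L.tail).prod) *
          ∏ i ∈ Finset.Icc 1 n \ S, E i i := by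
  rw [det_eq_RHSh n E hE, RHSh]
  refine Finset.sum_congr rfl fun S hS => ?_
  simp only [List.tail_cons, zipWith_eq_chainP]
end

section
/- Let α_1, …, α_n be an obtuse basis of V and let λ_1, …, λ_n be a positive dual family for α. Then ⟨λ_i, λ_j⟩ ≥ 0 for all indices i, j. -/
open RealInnerProductSpace

/-- If `α` is an obtuse basis and `v` has nonnegative inner products with all `α k`,
then the coordinates of `v` in the basis `α` are nonnegative. -/
lemma repr_nonneg_of_obtuse {V : Type*} [NormedAddCommGroup V] [InnerProductSpace ℝ V]
    (n : ℕ) (α : Module.Basis (Fin n) ℝ V)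
    (hobtuse : ∀ i j : Fin n, i ≠ j → ⟪α i, α j⟫ ≤ 0)
    (v : V) (hv : ∀ k : Fin n, 0 ≤ ⟪v, α k⟫) (i : Fin n) :
    0 ≤ α.repr v i := by
  classical
  set c : Fin n → ℝ := fun k => α.repr v k with hc
  set S : Finset (Fin n) := Finset.univ.filter (fun k => c k < 0) with hS
  set w : V := ∑ k ∈ S, (-c k) • α k with hw
  have hvsum : v = ∑ k : Fin n, c k • α k := (α.sum_repr v).symm
  -- v = vplus - w where vplus has nonneg coefficients
  have hsplit : v + w = ∑ k ∈ Sᶜ, c k • α k := by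
    rw [hvsum, hw, ← Finset.sum_compl_add_sum S (fun k => c k • α k)]
    rw [add_assoc, ← Finset.sum_add_distrib]
    simp [neg_smul, add_neg_cancel]
  have hvw : 0 ≤ ⟪v, w⟫ := by
    rw [hw, inner_sum]
    refine Finset.sum_nonneg fun k hk => ?_
    rw [real_inner_smul_right]
    have : 0 < -c k := by
      have := (Finset.mem_filter.mp hk).2
      linarith
    exact mul_nonneg this.le (hv k)
  have hpw : ⟪∑ k ∈ Sᶜ, c k • α k, w⟫ ≤ 0 := by
    rw [hw, inner_sum]
    refine Finset.sum_nonpos fun l hl => ?_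
    rw [sum_inner]
    refine Finset.sum_nonpos fun k hk => ?_
    rw [real_inner_smul_left, real_inner_smul_right]
    have hkS : k ∉ S := Finset.mem_compl.mp hk
    have hck : 0 ≤ c k := by
      by_contra h
      exact hkS (Finset.mem_filter.mpr ⟨Finset.mem_univ k, lt_of_not_ge h⟩)
    have hcl : 0 < -c l := by
      have := (Finset.mem_filter.mp hl).2
      linarith
    have hkl : k ≠ l := fun h => hkS (h ▸ hl)
    have := hobtuse k l hkl
    have h1 : c k * (-c l * ⟪α k, α l⟫) ≤ 0 :=
      mul_nonpos_of_nonneg_of_nonpos hck (mul_nonpos_of_nonneg_of_nonpos hcl.le this)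
    linarith
  have hww : ⟪w, w⟫ ≤ 0 := by
    have : ⟪v + w, w⟫ ≤ 0 := hsplit ▸ hpw
    rw [inner_add_left] at this
    linarith
  have hw0 : w = 0 := by
    have := real_inner_self_nonneg (x := w)
    exact inner_self_eq_zero.mp (le_antisymm hww this)
  -- coordinates of w
  have hrepr : ∀ k ∈ S, -c k = 0 := by
    intro k hk
    have : α.repr w = ∑ l ∈ S, (-c l) • α.repr (α l) := by
      rw [hw, map_sum]; simp
    rw [hw0, map_zero] at this
    have := congrArg (fun f => f k) this.symm
    simpa [Finsupp.single_apply, Finset.sum_ite_eq' S k, hk] using this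
  by_contra h
  have hiS : i ∈ S := Finset.mem_filter.mpr ⟨Finset.mem_univ i, lt_of_not_ge h⟩
  have := hrepr i hiS
  have hci : c i < 0 := (Finset.mem_filter.mp hiS).2
  linarith

/-- If `α` is an obtuse basis of a real inner product space and
`λ` is a positive dual family for `α`, then `⟨λ_i, λ_j⟩ ≥ 0` for all `i, j`. -/
theorem inner_nonneg_of_positive_dual_family_of_obtuse_basis
    {V : Type*} [NormedAddCommGroup V] [InnerProductSpace ℝ V]
    (n : ℕ) (hn : 1 ≤ n) (hdim : Module.finrank ℝ V = n)
    (α : Module.Basis (Fin n) ℝ V)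
    (hobtuse : ∀ i j : Fin n, i ≠ j → ⟪α i, α j⟫ ≤ 0)
    (lam : Fin n → V)
    (hdual_orth : ∀ i j : Fin n, i ≠ j → ⟪lam i, α j⟫ = 0)
    (hdual_pos : ∀ i : Fin n, 0 < ⟪lam i, α i⟫)
    (i j : Fin n) :
    0 ≤ ⟪lam i, lam j⟫ := by
  classical
  have hci : 0 ≤ α.repr (lam j) i :=
    repr_nonneg_of_obtuse n α hobtuse (lam j)
      (fun k => by
        rcases eq_or_ne j k with rfl | h
        · exact (hdual_pos j).le
        · exact (hdual_orth j k h).ge) i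
  have : ⟪lam i, lam j⟫ = α.repr (lam j) i * ⟪lam i, α i⟫ := by
    conv_lhs => rw [← α.sum_repr (lam j)]
    rw [inner_sum]
    rw [Finset.sum_eq_single i]
    · rw [real_inner_smul_right]
    · intro k _ hk
      rw [real_inner_smul_right, hdual_orth i k (Ne.symm hk), mul_zero]
    · intro h; exact absurd (Finset.mem_univ i) h
  rw [this]
  exact mul_nonneg hci (hdual_pos i).le
end

section
/- Let α_1, …, α_n be an obtuse basis of V whose Gram graph is connected, and let λ_1, …, λ_n be a positive dual family for α. Then ⟨λ_i, λ_j⟩ > 0 for all indices i, j. -/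
open RealInnerProductSpace

/-- If `α` is an obtuse basis of a real inner product space whose
Gram graph (edges `i ∼ j` iff `⟨α_i, α_j⟩ < 0`) is connected, and `λ` is a positive
dual family for `α`, then `⟨λ_i, λ_j⟩ > 0` for all `i, j`. -/
theorem inner_pos_of_positive_dual_family_of_connected_obtuse_basis
    {V : Type*} [NormedAddCommGroup V] [InnerProductSpace ℝ V]
    (n : ℕ) (hn : 1 ≤ n) (hdim : Module.finrank ℝ V = n)
    (α : Module.Basis (Fin n) ℝ V)
    (hobtuse : ∀ i j : Fin n, i ≠ j → ⟪α i, α j⟫ ≤ 0)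
    (hconn : (SimpleGraph.fromRel fun i j : Fin n => ⟪α i, α j⟫ < 0).Connected)
    (lam : Fin n → V)
    (hdual_orth : ∀ i j : Fin n, i ≠ j → ⟪lam i, α j⟫ = 0)
    (hdual_pos : ∀ i : Fin n, 0 < ⟪lam i, α i⟫)
    (i j : Fin n) :
    0 < ⟪lam i, lam j⟫ := by
  classical
  set c : Fin n → ℝ := fun k => α.repr (lam j) k with hc
  have hrepr : ∑ k, c k • α k = lam j := α.sum_repr (lam j)
  -- inner products with lam j pick out one coefficient
  have hinner : ∀ i : Fin n, ⟪lam i, lam j⟫ = c i * ⟪lam i, α i⟫ := by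
    intro i
    conv_lhs => rw [← hrepr]
    rw [inner_sum]
    rw [Finset.sum_eq_single i]
    · rw [real_inner_smul_right]
    · intro k _ hk
      rw [real_inner_smul_right, hdual_orth i k (Ne.symm hk), mul_zero]
    · intro h; exact absurd (Finset.mem_univ i) h
  -- c j > 0
  have hlamj : lam j ≠ 0 := by
    intro h
    have := hdual_pos j
    rw [h, inner_zero_left] at this
    exact lt_irrefl 0 this
  have hjj : 0 < ⟪lam j, lam j⟫ :=
    lt_of_le_of_ne real_inner_self_nonneg (fun h => hlamj (inner_self_eq_zero.mp h.symm))
  have hcj : 0 < c j := by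
    have := hinner j
    nlinarith [hdual_pos j]
  -- nonnegativity of all coefficients
  set d : Fin n → ℝ := fun k => min (c k) 0 with hd
  set e : Fin n → ℝ := fun k => max (c k) 0 with he
  have hde : ∀ k, d k + e k = c k := by
    intro k; simp [hd, he, min_add_max]
  set y : V := ∑ k, d k • α k with hy
  set x : V := ∑ k, e k • α k with hx
  have hxy : y + x = lam j := by
    rw [hy, hx, ← hrepr, ← Finset.sum_add_distrib]
    refine Finset.sum_congr rfl fun k _ => ?_
    rw [← add_smul, hde]
  have hylamj : ⟪y, lam j⟫ = 0 := by
    rw [hy, sum_inner]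
    refine Finset.sum_eq_zero fun k _ => ?_
    rw [real_inner_smul_left]
    by_cases hk : k = j
    · subst hk
      have : d k = 0 := min_eq_right hcj.le
      rw [this, zero_mul]
    · rw [real_inner_comm, hdual_orth j k (Ne.symm hk), mul_zero]
  have hyx : 0 ≤ ⟪y, x⟫ := by
    rw [hy, hx, sum_inner]
    refine Finset.sum_nonneg fun k _ => ?_
    rw [real_inner_smul_left, inner_sum, Finset.mul_sum]
    refine Finset.sum_nonneg fun l _ => ?_
    rw [real_inner_smul_right]
    by_cases hkl : k = l
    · subst hkl
      have hdk : d k * e k = 0 := by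
        rcases le_or_gt (c k) 0 with h | h
        · have : e k = 0 := max_eq_right h
          rw [this, mul_zero]
        · have : d k = 0 := min_eq_right h.le
          rw [this, zero_mul]
      have : d k * (e k * ⟪α k, α k⟫) = d k * e k * ⟪α k, α k⟫ := by ring
      rw [this, hdk, zero_mul]
    · have h1 : d k ≤ 0 := min_le_right _ _
      have h2 : 0 ≤ e l := le_max_right _ _
      have h3 : ⟪α k, α l⟫ ≤ 0 := hobtuse k l hkl
      nlinarith [mul_nonneg (neg_nonneg.mpr h1) (mul_nonneg h2 (neg_nonneg.mpr h3))]
  have hy0 : y = 0 := by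
    have h1 : ⟪y, y⟫ = ⟪y, lam j⟫ - ⟪y, x⟫ := by
      rw [← hxy, inner_add_right]; ring
    have h2 : ⟪y, y⟫ ≤ 0 := by rw [h1, hylamj]; linarith
    have h3 : 0 ≤ ⟪y, y⟫ := real_inner_self_nonneg
    exact inner_self_eq_zero.mp (le_antisymm h2 h3)
  have hd0 : ∀ k, d k = 0 := by
    have hli := Fintype.linearIndependent_iff.mp α.linearIndependent d (by rw [← hy]; exact hy0)
    exact hli
  have hnonneg : ∀ k, 0 ≤ c k := by
    intro k
    have := hd0 k
    rw [hd] at this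
    simp only [min_eq_right_iff] at this
    exact this
  -- key: strict positivity along walks to j
  set G := SimpleGraph.fromRel fun i j : Fin n => ⟪α i, α j⟫ < 0 with hG
  have hstep : ∀ a b : Fin n, G.Adj a b → 0 < c b → 0 < c a := by
    intro a b hab hcb
    by_cases haj : a = j
    · subst haj; exact hcj
    · have hab' : ⟪α a, α b⟫ < 0 := by
        rw [hG, SimpleGraph.fromRel_adj] at hab
        rcases hab.2 with h | h
        · exact h
        · rwa [real_inner_comm]
      have hba : b ≠ a := by
        rw [hG, SimpleGraph.fromRel_adj] at hab
        exact Ne.symm hab.1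
      have h0 : (0 : ℝ) = ∑ k, c k * ⟪α a, α k⟫ := by
        have horth : ⟪α a, lam j⟫ = 0 := by
          rw [real_inner_comm]; exact hdual_orth j a (Ne.symm haj)
        rw [← horth]
        conv_lhs => rw [← hrepr]
        rw [inner_sum]
        refine Finset.sum_congr rfl fun k _ => ?_
        rw [real_inner_smul_right]
      have hsplit : ∑ k, c k * ⟪α a, α k⟫ =
          c a * ⟪α a, α a⟫ + ∑ k ∈ Finset.univ.erase a, c k * ⟪α a, α k⟫ :=
        (Finset.add_sum_erase Finset.univ (fun k => c k * ⟪α a, α k⟫)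
          (Finset.mem_univ a)).symm
      have hbmem : b ∈ Finset.univ.erase a := Finset.mem_erase.mpr ⟨hba, Finset.mem_univ b⟩
      have hrest : ∑ k ∈ Finset.univ.erase a, c k * ⟪α a, α k⟫ < 0 := by
        rw [← Finset.add_sum_erase _ _ hbmem]
        have hterm : c b * ⟪α a, α b⟫ < 0 := mul_neg_of_pos_of_neg hcb hab'
        have hrest2 : ∑ k ∈ (Finset.univ.erase a).erase b, c k * ⟪α a, α k⟫ ≤ 0 := by
          refine Finset.sum_nonpos fun k hk => ?_
          have hka : k ≠ a := (Finset.mem_erase.mp (Finset.mem_of_mem_erase hk)).1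
          exact mul_nonpos_of_nonneg_of_nonpos (hnonneg k) (hobtuse a k (Ne.symm hka))
        linarith
      have hpos : 0 < c a * ⟪α a, α a⟫ := by
        rw [hsplit] at h0; linarith
      rcases (hnonneg a).lt_or_eq with h | h
      · exact h
      · exfalso; rw [← h, zero_mul] at hpos; exact lt_irrefl 0 hpos
  have key : ∀ a b : Fin n, G.Walk a b → 0 < c b → 0 < c a := by
    intro a b w
    induction w with
    | nil => exact id
    | cons h _ ih => exact fun hb => hstep _ _ h (ih hb)
  obtain ⟨w⟩ := hconn.preconnected i j
  rw [hinner i]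
  exact mul_pos (key i j w hcj) (hdual_pos i)
end

section
/- Let K be a simplicial complex in a real vector space E and let p be a cone point of K. Then K.space is star-shaped with respect to p: for every x ∈ K.space, the segment from p to x is contained in K.space (i.e., StarConvex ℝ p K.space holds). -/
/-- If `p` is a cone point of a simplicial complex `K` (a vertex
joinable to every face), then the underlying space of `K` is star-shaped with
respect to `p`. -/
theorem starConvex_space_of_conePoint
    {E : Type*} [AddCommGroup E] [Module ℝ E] [DecidableEq E]
    (K : Geometry.SimplicialComplex ℝ E) (p : E)
    (hvertex : {p} ∈ K.faces)
    (hcone : ∀ s ∈ K.faces, insert p s ∈ K.faces) :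
    StarConvex ℝ p K.space := by
  intro x hx a b ha hb hab
  obtain ⟨s, hs, hxs⟩ := Set.mem_iUnion₂.1 hx
  have hps : insert p s ∈ K.faces := hcone s hs
  have hsub : (convexHull ℝ (s : Set E)) ⊆ convexHull ℝ ((insert p s : Finset E) : Set E) := by
    apply convexHull_mono
    simp [Set.insert_subset_iff]
  have hp : p ∈ convexHull ℝ ((insert p s : Finset E) : Set E) :=
    subset_convexHull ℝ _ (by simp)
  have hx' : x ∈ convexHull ℝ ((insert p s : Finset E) : Set E) := hsub hxs
  have := (convex_convexHull ℝ ((insert p s : Finset E) : Set E)) hp hx' ha hb hab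
  exact Set.mem_iUnion₂.2 ⟨insert p s, hps, this⟩
end

section
/- Let K be a simplicial complex in a real vector space E having only finitely many vertices, and suppose K has at least one cone point. Then the set P of all cone points of K is itself a face of K. -/
/-- `p` is a cone point of the simplicial complex `K`: it is a vertex of `K` that
is joinable to every face of `K`. -/
def IsConePoint {E : Type*} [AddCommGroup E] [Module ℝ E] [DecidableEq E]
    (K : Geometry.SimplicialComplex ℝ E) (p : E) : Prop :=
  {p} ∈ K.faces ∧ ∀ s ∈ K.faces, insert p s ∈ K.faces

/-- If a simplicial complex `K` has only finitely many vertices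
and at least one cone point, then the set `P` of all cone points of `K` is itself
a face of `K`. -/
theorem conePoints_mem_faces
    {E : Type*} [AddCommGroup E] [Module ℝ E] [DecidableEq E]
    (K : Geometry.SimplicialComplex ℝ E)
    (hvfin : {p : E | {p} ∈ K.faces}.Finite)
    (hex : ∃ p, IsConePoint K p) :
    ∃ h : {p : E | IsConePoint K p}.Finite, h.toFinset ∈ K.faces := by
  have hfin : {p : E | IsConePoint K p}.Finite :=
    hvfin.subset fun p hp => hp.1
  refine ⟨hfin, ?_⟩
  have key : ∀ t : Finset E, t.Nonempty → (∀ p ∈ t, IsConePoint K p) → t ∈ K.faces := by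
    intro t
    induction t using Finset.induction with
    | empty => intro h; exact absurd h (by simp)
    | @insert p s hps ih =>
      intro _ hall
      rcases s.eq_empty_or_nonempty with rfl | hs
      · simpa using (hall p (by simp)).1
      · exact (hall p (by simp)).2 s (ih hs fun q hq => hall q (by simp [hq]))
  obtain ⟨p, hp⟩ := hex
  exact key _ ⟨p, by simpa using hp⟩ (fun q hq => by simpa using hq)
end

section
/- Let K be a simplicial complex in a real vector space E having only finitely many vertices and at least one cone point, and let P be the (finite, nonempty) set of all cone points of K. If T : E → E is an affine automorphism preserving K, in the sense that for every finite subset s of E one has s ∈ K.faces if and only if the image T(s) ∈ K.faces, then T fixes the barycenter (1/|P|) Σ_{p ∈ P} p of P. -/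
/-- Let `K` be a simplicial complex with finitely many vertices
and at least one cone point, and let `P` be the (finite, nonempty) set of all cone
points of `K`.  Any affine automorphism `T` of the ambient space preserving `K`
(i.e. `s ∈ K.faces ↔ T(s) ∈ K.faces` for all finite `s`) fixes the barycenter
`(1/|P|) Σ_{p ∈ P} p` of `P`. -/
theorem affine_symmetry_fixes_conePoint_barycenter
    {E : Type*} [AddCommGroup E] [Module ℝ E] [DecidableEq E]
    (K : Geometry.SimplicialComplex ℝ E)
    (hvfin : {p : E | {p} ∈ K.faces}.Finite)
    (hex : ∃ p, IsConePoint K p)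
    (hPfin : {p : E | IsConePoint K p}.Finite)
    (T : E ≃ᵃ[ℝ] E)
    (hT : ∀ s : Finset E, s ∈ K.faces ↔ s.image T ∈ K.faces) :
    T ((hPfin.toFinset.card : ℝ)⁻¹ • ∑ p ∈ hPfin.toFinset, p)
      = (hPfin.toFinset.card : ℝ)⁻¹ • ∑ p ∈ hPfin.toFinset, p := by
  classical
  set P := hPfin.toFinset with hP
  -- T maps cone points to cone points
  have hcone : ∀ p, IsConePoint K p → IsConePoint K (T p) := by
    intro p hp
    constructor
    · have := (hT {p}).1 hp.1
      simpa using this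
    · intro s hs
      have hs' : s.image T.symm ∈ K.faces := by
        have := (hT (s.image T.symm)).2
        apply this
        rw [Finset.image_image,
          show (⇑T ∘ ⇑T.symm) = id from funext fun x => T.apply_symm_apply x,
          Finset.image_id]
        exact hs
      have h2 := hp.2 _ hs'
      have h3 := (hT (insert p (s.image T.symm))).1 h2
      rw [Finset.image_insert, Finset.image_image,
        show (⇑T ∘ ⇑T.symm) = id from funext fun x => T.apply_symm_apply x,
        Finset.image_id] at h3
      exact h3
  have hinj : Function.Injective T := T.injective
  have himg : P.image T = P := by
    apply Finset.eq_of_subset_of_card_le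
    · intro x hx
      simp only [Finset.mem_image] at hx
      obtain ⟨p, hp, rfl⟩ := hx
      rw [hP, Set.Finite.mem_toFinset] at hp ⊢
      exact hcone p hp
    · rw [Finset.card_image_of_injective _ hinj]
  have hne : P.Nonempty := by
    obtain ⟨p, hp⟩ := hex
    exact ⟨p, by rwa [hP, Set.Finite.mem_toFinset]⟩
  have hcard : (P.card : ℝ) ≠ 0 := by
    exact Nat.cast_ne_zero.2 (Finset.card_pos.2 hne).ne'
  have hsum : ∑ p ∈ P, T p = ∑ p ∈ P, p := by
    conv_rhs => rw [← himg]
    rw [Finset.sum_image (fun a _ b _ h => hinj h)]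
  -- barycenter as affine combination
  have hw : ∑ _p ∈ P, (P.card : ℝ)⁻¹ = 1 := by
    rw [Finset.sum_const, nsmul_eq_mul, mul_inv_cancel₀ hcard]
  have hb : (P.card : ℝ)⁻¹ • ∑ p ∈ P, p
      = P.affineCombination ℝ (id : E → E) (fun _ => (P.card : ℝ)⁻¹) := by
    rw [Finset.affineCombination_eq_linear_combination _ _ _ hw, Finset.smul_sum]
    simp
  rw [hb, ← AffineEquiv.coe_toAffineMap,
    Finset.map_affineCombination P (id : E → E) _ hw T.toAffineMap,
    Finset.affineCombination_eq_linear_combination _ _ _ hw,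
    Finset.affineCombination_eq_linear_combination _ _ _ hw,
    ← Finset.smul_sum, ← Finset.smul_sum]
  simp only [Function.comp, id_eq, AffineEquiv.coe_toAffineMap]
  rw [hsum]
end

section
/- Let W be a group and R ⊆ W a subset such that: (i) the intersection condition holds, i.e., for every J ⊆ R, ⋂_{r ∈ R∖J} W_{R∖{r}} = W_J (the empty intersection, arising when J = R, being interpreted as W); and (ii) r ∉ W_{R∖{r}} for every r ∈ R. Let U, T ⊆ R with U ∩ T = ∅. Then for all g, g' ∈ W_{R∖U} and all J, J' ⊆ T: g·W_{R∖J} = g'·W_{R∖J'} if and only if J = J' and g·W_{R∖(U∪J)} = g'·W_{R∖(U∪J')}. Consequently, the assignment g·W_{R∖J} ↦ g·W_{R∖(U∪J)} is a well-defined bijection from {g·W_{R∖J} : g ∈ W_{R∖U}, J ⊆ T} onto {g·W_{R∖(U∪J)} : g ∈ W_{R∖U}, J ⊆ T} that commutes with left multiplication by elements of W_{R∖U}. -/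
open Pointwise

lemma coset_eq_coset_iff {W : Type*} [Group W] (H K : Subgroup W) (g g' : W) :
    g • (H : Set W) = g' • (K : Set W) ↔ H = K ∧ g⁻¹ * g' ∈ H := by
  constructor
  · intro h
    have hg' : g' ∈ g • (H : Set W) := by
      rw [h]
      exact ⟨1, K.one_mem, mul_one g'⟩
    obtain ⟨x, hx, hxe⟩ := hg'
    simp only [smul_eq_mul] at hxe
    have hmem : g⁻¹ * g' ∈ H := by
      have : g⁻¹ * g' = x := by rw [← hxe]; group
      rw [this]; exact hx
    have hmem' : g'⁻¹ * g ∈ H := by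
      have := H.inv_mem hmem
      simpa [mul_inv_rev] using this
    have hHK : (K : Set W) = (H : Set W) := by
      calc (K : Set W) = g'⁻¹ • g' • (K : Set W) := by
            rw [smul_smul, inv_mul_cancel, one_smul]
        _ = g'⁻¹ • g • (H : Set W) := by rw [h]
        _ = (g'⁻¹ * g) • (H : Set W) := by rw [smul_smul]
        _ = (H : Set W) := smul_coe_set hmem'
    exact ⟨(SetLike.coe_injective hHK).symm, hmem⟩
  · rintro ⟨rfl, hmem⟩
    calc g • (H : Set W) = g • (g⁻¹ * g') • (H : Set W) := by rw [smul_coe_set hmem]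
      _ = g' • (H : Set W) := by rw [smul_smul]; group

lemma closure_diff_inf {W : Type*} [Group W] (R : Set W)
    (hic : ∀ J ⊆ R, (⨅ r ∈ R \ J, Subgroup.closure (R \ {r})) = Subgroup.closure J)
    (S : Set W) (hS : S ⊆ R) :
    Subgroup.closure (R \ S) = ⨅ r ∈ S, Subgroup.closure (R \ {r}) := by
  have h := hic (R \ S) Set.diff_subset
  rw [Set.diff_diff_cancel_left hS] at h
  exact h.symm

/-- Let `W` be a group and `R ⊆ W` satisfying the intersection
condition `⋂_{r ∈ R∖J} W_{R∖{r}} = W_J` (empty intersection read as `W`) and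
`r ∉ W_{R∖{r}}` for all `r ∈ R`.  Let `U, T ⊆ R` with `U ∩ T = ∅`.  Then for
`g, g' ∈ W_{R∖U}` and `J, J' ⊆ T`, one has `g·W_{R∖J} = g'·W_{R∖J'}` iff `J = J'`
and `g·W_{R∖(U∪J)} = g'·W_{R∖(U∪J')}`; hence `g·W_{R∖J} ↦ g·W_{R∖(U∪J)}` is a
well-defined `W_{R∖U}`-equivariant bijection between the two families of
cosets. -/
theorem coset_map_well_defined_bijection
    {W : Type*} [Group W] (R : Set W)
    (hic : ∀ J ⊆ R, (⨅ r ∈ R \ J, Subgroup.closure (R \ {r})) = Subgroup.closure J)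
    (hnr : ∀ r ∈ R, r ∉ Subgroup.closure (R \ {r}))
    (U T : Set W) (hU : U ⊆ R) (hT : T ⊆ R) (hUT : U ∩ T = ∅)
    (g g' : W)
    (hg : g ∈ Subgroup.closure (R \ U)) (hg' : g' ∈ Subgroup.closure (R \ U))
    (J J' : Set W) (hJ : J ⊆ T) (hJ' : J' ⊆ T) :
    g • (Subgroup.closure (R \ J) : Set W)
        = g' • (Subgroup.closure (R \ J') : Set W) ↔
      J = J' ∧
        g • (Subgroup.closure (R \ (U ∪ J)) : Set W)
          = g' • (Subgroup.closure (R \ (U ∪ J')) : Set W) := by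
  have hJR : J ⊆ R := hJ.trans hT
  have hJ'R : J' ⊆ R := hJ'.trans hT
  -- closure equality implies set equality
  have hclos_inj : ∀ A B : Set W, A ⊆ R → B ⊆ R →
      Subgroup.closure (R \ A) = Subgroup.closure (R \ B) → A ⊆ B := by
    intro A B hA hB hAB r hrA
    by_contra hrB
    have hrR : r ∈ R := hA hrA
    have h1 : r ∈ Subgroup.closure (R \ B) :=
      Subgroup.subset_closure ⟨hrR, hrB⟩
    rw [← hAB] at h1
    have h2 : Subgroup.closure (R \ A) ≤ Subgroup.closure (R \ {r}) :=
      Subgroup.closure_mono (Set.diff_subset_diff_right (by simpa using hrA))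
    exact hnr r hrR (h2 h1)
  have key : ∀ A : Set W, A ⊆ T →
      Subgroup.closure (R \ (U ∪ A))
        = Subgroup.closure (R \ U) ⊓ Subgroup.closure (R \ A) := by
    intro A hA
    rw [closure_diff_inf R hic U hU, closure_diff_inf R hic A (hA.trans hT),
      closure_diff_inf R hic (U ∪ A) (Set.union_subset hU (hA.trans hT)),
      iInf_union]
  rw [coset_eq_coset_iff, coset_eq_coset_iff]
  constructor
  · rintro ⟨hcl, hmem⟩
    have hJJ' : J = J' :=
      Set.Subset.antisymm (hclos_inj J J' hJR hJ'R hcl) (hclos_inj J' J hJ'R hJR hcl.symm)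
    subst hJJ'
    refine ⟨rfl, rfl, ?_⟩
    rw [key J hJ]
    exact Subgroup.mem_inf.2 ⟨mul_mem ((Subgroup.closure (R \ U)).inv_mem hg) hg', hmem⟩
  · rintro ⟨rfl, -, hmem⟩
    rw [key J hJ] at hmem
    exact ⟨rfl, hmem.2⟩
end

section
/- Fix n ≥ 1, let e_1, …, e_{n+1} be the standard basis of ℂ^{n+1} regarded as a real vector space, and let α_1, …, α_n be nonzero complex numbers that are pairwise linearly independent over ℝ (for i ≠ j, α_i is not a real multiple of α_j). Then: (a) for every subset J ⊆ {1, …, n} and every injective map φ : J → {1, …, n+1}, the points {α_i · e_{φ(i)} : i ∈ J} are affinely independent over ℝ; and (b) for any two subsets J, K ⊆ {1, …, n} and injective maps φ : J → {1, …, n+1} and ψ : K → {1, …, n+1}, the intersection of the real convex hulls convexHull{α_i e_{φ(i)} : i ∈ J} ∩ convexHull{α_i e_{ψ(i)} : i ∈ K} equals the real convex hull of {α_i e_{φ(i)} : i ∈ J ∩ K and φ(i) = ψ(i)} (the convex hull of the empty set being empty). In other words, these simplices form a geometric simplicial complex. -/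
open Finset

private lemma key_eval {n : ℕ} (α : Fin n → ℂ) {J : Set (Fin n)}
    (φ : J → Fin (n + 1)) (hφ : Function.Injective φ)
    (s : Finset J) (w : J → ℝ) (j : J) :
    (∑ i ∈ s, w i • (Pi.single (φ i) (α i) : Fin (n + 1) → ℂ)) (φ j)
      = if j ∈ s then w j • α j else 0 := by
  classical
  rw [Finset.sum_apply]
  have : ∀ i ∈ s, (w i • (Pi.single (φ i) (α i) : Fin (n + 1) → ℂ)) (φ j)
      = if j = i then w i • α i else 0 := by
    intro i _
    simp [Pi.single_apply, hφ.eq_iff, eq_comm (a := j), smul_ite]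
  rw [Finset.sum_congr rfl this, Finset.sum_ite_eq]

private lemma key_eval_zero {n : ℕ} (α : Fin n → ℂ) {J : Set (Fin n)}
    (φ : J → Fin (n + 1)) (s : Finset J) (w : J → ℝ) (m : Fin (n + 1))
    (hm : ∀ i, φ i ≠ m) :
    (∑ i ∈ s, w i • (Pi.single (φ i) (α i) : Fin (n + 1) → ℂ)) m = 0 := by
  classical
  rw [Finset.sum_apply]
  refine Finset.sum_eq_zero fun i _ => ?_
  have : m ≠ φ i := fun h => hm i h.symm
  simp [Pi.single_apply, this]

/-- Membership in the convex hull of the points `α_i e_{φ i}`. -/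
private lemma mem_hull_iff {n : ℕ} (α : Fin n → ℂ) {J : Set (Fin n)}
    [Fintype J] (φ : J → Fin (n + 1)) (x : Fin (n + 1) → ℂ) :
    x ∈ convexHull ℝ {y | ∃ i : J, y = (Pi.single (φ i) (α i) : Fin (n + 1) → ℂ)} ↔
    ∃ w : J → ℝ, (∀ i, 0 ≤ w i) ∧ ∑ i, w i = 1 ∧
      ∑ i, w i • (Pi.single (φ i) (α i) : Fin (n + 1) → ℂ) = x := by
  classical
  have hset : {y | ∃ i : J, y = (Pi.single (φ i) (α i) : Fin (n + 1) → ℂ)}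
      = Set.range fun i : J => (Pi.single (φ i) (α i) : Fin (n + 1) → ℂ) := by
    ext y; constructor
    · rintro ⟨i, h⟩; exact ⟨i, h.symm⟩
    · rintro ⟨i, h⟩; exact ⟨i, h.symm⟩
  rw [hset, convexHull_range_eq_exists_affineCombination]
  constructor
  · rintro ⟨s, w, hw₀, hw₁, rfl⟩
    refine ⟨fun i => if i ∈ s then w i else 0, fun i => ?_, ?_, ?_⟩
    · dsimp only
      split
      · exact hw₀ _ ‹_›
      · exact le_rfl
    · simp only
      rw [Finset.sum_ite_mem, Finset.univ_inter, hw₁]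
    · rw [Finset.affineCombination_eq_linear_combination _ _ _ hw₁]
      have hc : ∀ i ∈ (Finset.univ : Finset J),
          (if i ∈ s then w i else 0) • (Pi.single (φ i) (α i) : Fin (n + 1) → ℂ)
          = if i ∈ s then w i • (Pi.single (φ i) (α i) : Fin (n + 1) → ℂ) else 0 := by
        intro i _; split <;> simp
      rw [Finset.sum_congr rfl hc, Finset.sum_ite_mem, Finset.univ_inter]
  · rintro ⟨w, hw₀, hw₁, hx⟩
    refine ⟨Finset.univ, w, fun i _ => hw₀ i, hw₁, ?_⟩
    rw [Finset.affineCombination_eq_linear_combination _ _ _ hw₁, hx]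

/-- Let `e_1, …, e_{n+1}` be the standard basis of `ℂ^{n+1}`
(regarded as a real vector space) and let `α_1, …, α_n` be nonzero complex numbers
that are pairwise linearly independent over `ℝ`.  Then (a) for every `J ⊆ {1,…,n}`
and injection `φ : J → {1,…,n+1}` the points `α_i e_{φ(i)}` (`i ∈ J`) are affinely
independent over `ℝ`, and (b) the real convex hulls of two such point sets meet
exactly in the convex hull of their common points; i.e. these simplices form a
geometric simplicial complex (the system `(S_{n+1}, R*_n, Λ)` is well-framed). -/
theorem star_system_is_well_framed
    (n : ℕ) (hn : 1 ≤ n) (α : Fin n → ℂ)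
    (hα₀ : ∀ i, α i ≠ 0)
    (hpair : ∀ i j : Fin n, i ≠ j → ∀ c : ℝ, α i ≠ c • α j) :
    (∀ (J : Set (Fin n)) (φ : J → Fin (n + 1)), Function.Injective φ →
      AffineIndependent ℝ
        (fun i : J => (Pi.single (φ i) (α i) : Fin (n + 1) → ℂ)))
    ∧
    (∀ (J K : Set (Fin n)) (φ : J → Fin (n + 1)) (ψ : K → Fin (n + 1)),
      Function.Injective φ → Function.Injective ψ →
      convexHull ℝ {x | ∃ i : J, x = (Pi.single (φ i) (α i) : Fin (n + 1) → ℂ)} ∩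
        convexHull ℝ {x | ∃ i : K, x = (Pi.single (ψ i) (α i) : Fin (n + 1) → ℂ)}
      = convexHull ℝ {x | ∃ (i : Fin n) (hJ : i ∈ J) (hK : i ∈ K),
          φ ⟨i, hJ⟩ = ψ ⟨i, hK⟩ ∧
          x = (Pi.single (φ ⟨i, hJ⟩) (α i) : Fin (n + 1) → ℂ)}) := by
  constructor
  · -- (a) affine independence
    intro J φ hφ
    rw [affineIndependent_iff]
    intro s w hw0 hsum e he
    have h := key_eval α φ hφ s w e
    rw [hsum] at h
    simp only [he, if_true, Pi.zero_apply] at h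
    exact (smul_eq_zero.mp h.symm).resolve_right (hα₀ e)
  · -- (b) intersection of hulls
    intro J K φ ψ hφ hψ
    classical
    haveI : Fintype J := Fintype.ofFinite J
    haveI : Fintype K := Fintype.ofFinite K
    apply Set.Subset.antisymm
    · rintro x ⟨hxJ, hxK⟩
      rw [mem_hull_iff] at hxJ hxK
      obtain ⟨w, hw0, hw1, hwx⟩ := hxJ
      obtain ⟨u, hu0, hu1, hux⟩ := hxK
      have good : ∀ i : J, w i ≠ 0 →
          ∃ hK : (i : Fin n) ∈ K, ψ ⟨i, hK⟩ = φ i := by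
        intro i hwi
        have hx_eq : x (φ i) = w i • α i := by
          rw [← hwx]
          simpa using key_eval α φ hφ Finset.univ w i
        have hne : x (φ i) ≠ 0 := by
          rw [hx_eq]; exact smul_ne_zero hwi (hα₀ i)
        by_cases hk : ∃ k : K, ψ k = φ i
        · obtain ⟨k, hk⟩ := hk
          have hxk : x (φ i) = u k • α k := by
            rw [← hux, ← hk]
            simpa using key_eval α ψ hψ Finset.univ u k
          have key : w i • α (i : Fin n) = u k • α (k : Fin n) := by
            rw [← hx_eq, hxk]
          have hik : (i : Fin n) = (k : Fin n) := by
            by_contra hne'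
            exact hpair (i : Fin n) (k : Fin n) hne' ((w i)⁻¹ * u k)
              (by rw [mul_smul, ← key, inv_smul_smul₀ hwi])
          have hiK : (i : Fin n) ∈ K := hik ▸ k.2
          have hkeq : k = ⟨(i : Fin n), hiK⟩ := Subtype.ext hik.symm
          exact ⟨hiK, by rw [← hkeq]; exact hk⟩
        · exfalso
          apply hne
          rw [← hux]
          exact key_eval_zero α ψ Finset.univ u (φ i) (fun k h => hk ⟨k, h⟩)
      set t := Finset.univ.filter (fun i : J => w i ≠ 0) with ht
      have hsum_t : ∑ i ∈ t, w i = 1 := by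
        rw [ht, Finset.sum_filter_ne_zero, hw1]
      have hx_t : ∑ i ∈ t, w i • (Pi.single (φ i) (α i) : Fin (n + 1) → ℂ) = x := by
        rw [← hwx, ht]
        apply Finset.sum_filter_of_ne
        intro i _ h hw0'
        exact h (by rw [hw0', zero_smul])
      have hmem := Finset.centerMass_mem_convexHull (R := ℝ) t
        (s := {x | ∃ (i : Fin n) (hJ : i ∈ J) (hK : i ∈ K),
          φ ⟨i, hJ⟩ = ψ ⟨i, hK⟩ ∧
          x = (Pi.single (φ ⟨i, hJ⟩) (α i) : Fin (n + 1) → ℂ)})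
        (w := w) (z := fun i : J => (Pi.single (φ i) (α i) : Fin (n + 1) → ℂ))
        (fun i _ => hw0 i) (by rw [hsum_t]; norm_num) ?_
      · rwa [Finset.centerMass_eq_of_sum_1 _ _ hsum_t, hx_t] at hmem
      · intro i hi
        have hwi : w i ≠ 0 := (Finset.mem_filter.mp hi).2
        obtain ⟨hiK, hψi⟩ := good i hwi
        exact ⟨(i : Fin n), i.2, hiK, hψi.symm, rfl⟩
    · refine Set.subset_inter (convexHull_mono ?_) (convexHull_mono ?_)
      · rintro x ⟨i, hJ, hK, heq, rfl⟩
        exact ⟨⟨i, hJ⟩, rfl⟩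
      · rintro x ⟨i, hJ, hK, heq, rfl⟩
        exact ⟨⟨i, hK⟩, by rw [heq]⟩
end
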